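/- arXiv:1707.00109 — 3 statements merged into one kernel-verified Lean document; each statement's English description precedes it below -/
import Mathlib

section
/- Let X and Y be Banach spaces with X reflexive, U a dense linear subspace of X, and V a dense linear subspace of X*. Suppose j₀ : U → Y and k₀ : V → Y* are bounded linear operators such that the range of j₀ is dense in Y and ⟨x*, x⟩ = ⟨k₀(x*), j₀(x)⟩ for all x ∈ U, x* ∈ V. Then j₀ and k₀ extend to bounded linear operators j : X → Y and k : X* → Y* which are surjective (hence invertible), and for every x ∈ X one has (1/‖k‖)·‖x‖ ≤ ‖j(x)‖ ≤ ‖j‖·‖x‖, and for every x* ∈ X* one has (1/‖j‖)·‖x*‖ ≤ ‖k(x*)‖ ≤ ‖k‖·‖x*‖. -/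
open NormedSpace

/-!
Extend `j₀`, `k₀` by continuity; the identity `x' x = k x' (j x)` then holds on all of `X × X*`.
Estimating `x' x` through it gives `‖x‖ ≤ ‖k‖ ‖j x‖` (by Hahn–Banach) and `‖x'‖ ≤ ‖j‖ ‖k x'‖`.
So `j` is bounded below, its range is closed and dense, hence `j` is onto. Then for `y' ∈ Y*`
the functional `y' ∘ j` is a preimage under `k`, since `k (y' ∘ j)` and `y'` agree on `j x`.
-/

theorem ContinuousLinearMap.exists_extension_of_dense {𝕜 E F : Type*} [NontriviallyNormedField 𝕜]
    [NormedAddCommGroup E] [NormedSpace 𝕜 E] [NormedAddCommGroup F] [NormedSpace 𝕜 F]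
    [CompleteSpace F] {U : Submodule 𝕜 E} (hU : Dense (U : Set E)) (f : U →L[𝕜] F) :
    ∃ g : E →L[𝕜] F, ∀ u : U, g u = f u :=
  ⟨f.extend U.subtypeL, f.extend_eq hU.denseRange_val isometry_subtype_coe.isUniformInducing⟩

section DualPair

variable {𝕜 E F : Type*} [RCLike 𝕜] [NormedAddCommGroup E] [NormedSpace 𝕜 E]
  [NormedAddCommGroup F] [NormedSpace 𝕜 F]
  {j : E →L[𝕜] F} {k : StrongDual 𝕜 E →L[𝕜] StrongDual 𝕜 F}

theorem dualPairing_eq_of_dense {U : Set E} (hU : Dense U) {V : Set (StrongDual 𝕜 E)}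
    (hV : Dense V) (h : ∀ x ∈ U, ∀ x' ∈ V, x' x = k x' (j x)) (x : E) (x' : StrongDual 𝕜 E) :
    x' x = k x' (j x) := by
  have hU' : ∀ y ∈ U, ∀ y' : StrongDual 𝕜 E, y' y = k y' (j y) := fun y hy =>
    hV.induction (h y hy) <| isClosed_eq (ContinuousLinearMap.apply 𝕜 𝕜 y).continuous
      ((ContinuousLinearMap.apply 𝕜 𝕜 (j y)).continuous.comp k.continuous)
  exact hU.induction (fun y hy => hU' y hy x')
    (isClosed_eq x'.continuous ((k x').continuous.comp j.continuous)) x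

variable (hjk : ∀ x x', x' x = k x' (j x))
include hjk

theorem norm_le_opNorm_mul_norm_of_dualPairing (x : E) : ‖x‖ ≤ ‖k‖ * ‖j x‖ := by
  refine norm_le_dual_bound 𝕜 x (by positivity) fun x' => ?_
  calc ‖x' x‖ = ‖k x' (j x)‖ := by rw [hjk]
    _ ≤ ‖k x'‖ * ‖j x‖ := (k x').le_opNorm _
    _ ≤ ‖k‖ * ‖x'‖ * ‖j x‖ := by gcongr; exact k.le_opNorm x'
    _ = ‖k‖ * ‖j x‖ * ‖x'‖ := by ring

theorem norm_dual_le_opNorm_mul_norm_of_dualPairing (x' : StrongDual 𝕜 E) :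
    ‖x'‖ ≤ ‖j‖ * ‖k x'‖ := by
  refine x'.opNorm_le_bound (by positivity) fun x => ?_
  calc ‖x' x‖ = ‖k x' (j x)‖ := by rw [hjk]
    _ ≤ ‖k x'‖ * ‖j x‖ := (k x').le_opNorm _
    _ ≤ ‖k x'‖ * (‖j‖ * ‖x‖) := by gcongr; exact j.le_opNorm x
    _ = ‖j‖ * ‖k x'‖ * ‖x‖ := by ring

theorem isClosed_range_of_dualPairing [CompleteSpace E] : IsClosed (Set.range j) :=
  have hanti : AntilipschitzWith ‖k‖₊ j :=
    j.antilipschitz_of_bound (norm_le_opNorm_mul_norm_of_dualPairing hjk)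
  hanti.isClosed_range j.uniformContinuous

theorem surjective_of_dualPairing [CompleteSpace E] (hj : DenseRange j) :
    Function.Surjective j := by
  rw [← Set.range_eq_univ, ← (isClosed_range_of_dualPairing hjk).closure_eq]
  exact hj.closure_range

theorem surjective_dual_of_dualPairing (hj : Function.Surjective j) : Function.Surjective k := by
  intro y'
  refine ⟨y'.comp j, ContinuousLinearMap.ext fun y => ?_⟩
  obtain ⟨x, rfl⟩ := hj y
  exact (hjk x (y'.comp j)).symm

end DualPair

theorem stmt0_general {X Y : Type*} [NormedAddCommGroup X] [NormedSpace ℝ X] [CompleteSpace X]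
    [NormedAddCommGroup Y] [NormedSpace ℝ Y] [CompleteSpace Y]
    (U : Submodule ℝ X) (hU : Dense (U : Set X))
    (V : Submodule ℝ (StrongDual ℝ X)) (hV : Dense (V : Set (StrongDual ℝ X)))
    (j₀ : U →L[ℝ] Y) (k₀ : V →L[ℝ] StrongDual ℝ Y)
    (hdense : DenseRange j₀)
    (hpair : ∀ (x : U) (x' : V), (x' : StrongDual ℝ X) (x : X) = k₀ x' (j₀ x)) :
    ∃ (j : X →L[ℝ] Y) (k : StrongDual ℝ X →L[ℝ] StrongDual ℝ Y),
      (∀ u : U, j u = j₀ u) ∧ (∀ v : V, k v = k₀ v) ∧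
      Function.Surjective j ∧ Function.Surjective k ∧
      (∀ x : X, (1 / ‖k‖) * ‖x‖ ≤ ‖j x‖ ∧ ‖j x‖ ≤ ‖j‖ * ‖x‖) ∧
      (∀ x' : StrongDual ℝ X, (1 / ‖j‖) * ‖x'‖ ≤ ‖k x'‖ ∧ ‖k x'‖ ≤ ‖k‖ * ‖x'‖) := by
  obtain ⟨j, hj⟩ := j₀.exists_extension_of_dense hU
  obtain ⟨k, hk⟩ := k₀.exists_extension_of_dense hV
  have hjk : ∀ x x', x' x = k x' (j x) := dualPairing_eq_of_dense hU hV fun x hx x' hx' => by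
    simpa only [← hj ⟨x, hx⟩, ← hk ⟨x', hx'⟩] using hpair ⟨x, hx⟩ ⟨x', hx'⟩
  have hjdense : DenseRange j := hdense.mono (by rintro _ ⟨u, rfl⟩; exact ⟨u, hj u⟩)
  have hjsurj := surjective_of_dualPairing hjk hjdense
  refine ⟨j, k, hj, hk, hjsurj, surjective_dual_of_dualPairing hjk hjsurj,
    fun x => ⟨?_, j.le_opNorm x⟩, fun x' => ⟨?_, k.le_opNorm x'⟩⟩
  · rw [one_div]
    exact inv_mul_le_of_le_mul₀ k.opNorm_nonneg (norm_nonneg _)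
      (norm_le_opNorm_mul_norm_of_dualPairing hjk x)
  · rw [one_div]
    exact inv_mul_le_of_le_mul₀ j.opNorm_nonneg (norm_nonneg _)
      (norm_dual_le_opNorm_mul_norm_of_dualPairing hjk x')

/-- Lemma 2.1 of the paper: extension of a dual pair of densely defined operators. -/
theorem stmt0 {X Y : Type*} [NormedAddCommGroup X] [NormedSpace ℝ X] [CompleteSpace X]
    [NormedAddCommGroup Y] [NormedSpace ℝ Y] [CompleteSpace Y]
    (hrefl : Function.Surjective (NormedSpace.inclusionInDoubleDual ℝ X))
    (U : Submodule ℝ X) (hU : Dense (U : Set X))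
    (V : Submodule ℝ (StrongDual ℝ X)) (hV : Dense (V : Set (StrongDual ℝ X)))
    (j₀ : U →L[ℝ] Y) (k₀ : V →L[ℝ] StrongDual ℝ Y)
    (hdense : DenseRange j₀)
    (hpair : ∀ (x : U) (x' : V), (x' : StrongDual ℝ X) (x : X) = k₀ x' (j₀ x)) :
    ∃ (j : X →L[ℝ] Y) (k : StrongDual ℝ X →L[ℝ] StrongDual ℝ Y),
      (∀ u : U, j u = j₀ u) ∧ (∀ v : V, k v = k₀ v) ∧
      Function.Surjective j ∧ Function.Surjective k ∧
      (∀ x : X, (1 / ‖k‖) * ‖x‖ ≤ ‖j x‖ ∧ ‖j x‖ ≤ ‖j‖ * ‖x‖) ∧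
      (∀ x' : StrongDual ℝ X, (1 / ‖j‖) * ‖x'‖ ≤ ‖k x'‖ ∧ ‖k x'‖ ≤ ‖k‖ * ‖x'‖) :=
  stmt0_general U hU V hV j₀ k₀ hdense hpair
end

section
/- Let 0 < p ≤ 1, let (Ω, F, P) be a probability space with a filtration (F_n)_{n≥0}, and let (f_n)_{n≥0} be a sequence of nonnegative integrable random variables. Then (E|∑_{n≥0} f_n|^p)^{1/p} ≤ p^{−1} · (E|∑_{n≥0} E(f_n | F_n)|^p)^{1/p}. -/
/-!
Write `g n = E(f n | ℱ n)`, `G = ∑ g n`, `F = ∑ f n` and `S n = g 0 + ⋯ + g n`. Concavity of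
`t ↦ t ^ p` gives `S (n-1) ^ p + p S n ^ (p-1) g n ≤ S n ^ p`, hence `p ∑ S n ^ (p-1) g n ≤ G ^ p`.
As `S n ^ (p-1)` is `ℱ n`-measurable and dominates `G ^ (p-1)`,
`E[G ^ (p-1) f n] ≤ E[S n ^ (p-1) f n] = E[S n ^ (p-1) g n]`; summing,
`p E[G ^ (p-1) F] ≤ E[G ^ p]`.
Hölder's inequality with exponents `1/p` and `1/(1-p)`, applied to
`F ^ p = (G ^ (p-1) F) ^ p (G ^ p) ^ (1-p)`, turns this into `E[F ^ p] ≤ p ^ (-p) E[G ^ p]`.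
-/

open MeasureTheory
open scoped ENNReal NNReal

theorem Real.rpow_add_mul_rpow_sub_one_mul_le {p : ℝ} (hp0 : 0 ≤ p) (hp1 : p ≤ 1) {a c : ℝ}
    (ha : 0 ≤ a) (hc : 0 ≤ c) : a ^ p + p * (a + c) ^ (p - 1) * c ≤ (a + c) ^ p := by
  rcases (add_nonneg ha hc).eq_or_lt with hb | hb
  · obtain ⟨rfl, rfl⟩ : a = 0 ∧ c = 0 := by constructor <;> linarith
    simp
  have hbern := rpow_one_add_le_one_add_mul_self (s := -(c / (a + c)))
    (by rw [neg_le_neg_iff, div_le_one hb]; linarith) hp0 hp1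
  have hsub : 1 + -(c / (a + c)) = a / (a + c) := by field_simp; ring
  rw [hsub, Real.div_rpow ha hb.le, div_le_iff₀ (by positivity)] at hbern
  have hpow : (a + c) ^ (p - 1) * (a + c) = (a + c) ^ p := by
    rw [← Real.rpow_add_one hb.ne', sub_add_cancel]
  calc a ^ p + p * (a + c) ^ (p - 1) * c
      ≤ (1 + p * -(c / (a + c))) * (a + c) ^ p + p * (a + c) ^ (p - 1) * c := by gcongr
    _ = (a + c) ^ p := by rw [← hpow]; field_simp; ring

theorem ENNReal.rpow_add_mul_rpow_sub_one_mul_le {p : ℝ} (hp0 : 0 < p) (hp1 : p ≤ 1)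
    {a c : ℝ≥0∞} (ha : a ≠ ∞) (hc : c ≠ ∞) :
    a ^ p + ENNReal.ofReal p * (a + c) ^ (p - 1) * c ≤ (a + c) ^ p := by
  rcases eq_or_ne (a + c) 0 with h0 | h0
  · obtain ⟨rfl, rfl⟩ := add_eq_zero.1 h0
    simp [ENNReal.zero_rpow_of_pos hp0]
  lift a to ℝ≥0 using ha
  lift c to ℝ≥0 using hc
  have hp : ENNReal.ofReal p = ((Real.toNNReal p : ℝ≥0) : ℝ≥0∞) := rfl
  rw [← ENNReal.coe_add] at h0 ⊢
  have h0' : a + c ≠ 0 := by exact_mod_cast h0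
  rw [← ENNReal.coe_rpow_of_ne_zero h0', ← ENNReal.coe_rpow_of_nonneg _ hp0.le,
    ← ENNReal.coe_rpow_of_nonneg _ hp0.le, hp]
  norm_cast
  rw [← NNReal.coe_le_coe]
  push_cast
  rw [Real.coe_toNNReal _ hp0.le]
  exact Real.rpow_add_mul_rpow_sub_one_mul_le hp0.le hp1 a.2 c.2

theorem ENNReal.rpow_le_rpow_of_nonpos {x y : ℝ≥0∞} (hxy : x ≤ y) {z : ℝ} (hz : z ≤ 0) :
    y ^ z ≤ x ^ z := by
  have := ENNReal.inv_le_inv.2 (ENNReal.rpow_le_rpow hxy (neg_nonneg.2 hz))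
  rwa [← ENNReal.rpow_neg, ← ENNReal.rpow_neg, neg_neg] at this

theorem ENNReal.tsum_ofReal_mul_rpow_sum_range_mul_le {p : ℝ} (hp0 : 0 < p) (hp1 : p ≤ 1)
    {a : ℕ → ℝ≥0∞} (ha : ∀ n, a n ≠ ∞) :
    ∑' n, ENNReal.ofReal p * (∑ k ∈ Finset.range (n + 1), a k) ^ (p - 1) * a n
      ≤ (∑' n, a n) ^ p := by
  have hfinite : ∀ N, ∑ n ∈ Finset.range N,
      ENNReal.ofReal p * (∑ k ∈ Finset.range (n + 1), a k) ^ (p - 1) * a n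
        ≤ (∑ k ∈ Finset.range N, a k) ^ p := by
    intro N
    induction N with
    | zero => simp
    | succ N ih =>
      rw [Finset.sum_range_succ, Finset.sum_range_succ a N]
      calc _ ≤ (∑ k ∈ Finset.range N, a k) ^ p
            + ENNReal.ofReal p * (∑ k ∈ Finset.range N, a k + a N) ^ (p - 1) * a N := by
            rw [← Finset.sum_range_succ a N]; gcongr
        _ ≤ _ := ENNReal.rpow_add_mul_rpow_sub_one_mul_le hp0 hp1
            (ENNReal.sum_ne_top.2 fun k _ => ha k) (ha N)
  rw [ENNReal.tsum_eq_iSup_nat]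
  exact iSup_le fun N => (hfinite N).trans (by gcongr; exact ENNReal.sum_le_tsum _)

theorem ENNReal.rpow_eq_rpow_sub_one_mul_rpow_mul_rpow {p : ℝ} (hp0 : 0 < p) (hp1 : p < 1)
    {x y : ℝ≥0∞} (hy : y ≠ ∞) (hxy : y ^ (p - 1) * x ≠ ∞) :
    x ^ p = (y ^ (p - 1) * x) ^ p * (y ^ p) ^ (1 - p) := by
  rcases eq_or_ne y 0 with rfl | hy0
  · -- `0 ^ (p - 1) = ∞`, so finiteness of `y ^ (p - 1) * x` forces `x = 0`
    have hx : x = 0 := by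
      by_contra hx
      exact hxy (by rw [ENNReal.zero_rpow_of_neg (by linarith), ENNReal.top_mul hx])
    simp [hx, ENNReal.zero_rpow_of_pos hp0, ENNReal.zero_rpow_of_pos (sub_pos.2 hp1)]
  rw [ENNReal.mul_rpow_of_nonneg _ _ hp0.le, ← ENNReal.rpow_mul, ← ENNReal.rpow_mul,
    mul_comm _ (x ^ p), mul_assoc, ← ENNReal.rpow_add _ _ hy0 hy,
    show (p - 1) * p + p * (1 - p) = 0 by ring,
    ENNReal.rpow_zero, mul_one]

theorem lintegral_mul_condLExp {Ω : Type*} {m m0 : MeasurableSpace Ω} (hm : m ≤ m0)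
    {μ : Measure Ω} [SigmaFinite (μ.trim hm)] {X φ : Ω → ℝ≥0∞} (hX : AEMeasurable X μ)
    (hφ : Measurable[m] φ) :
    ∫⁻ ω, φ ω * μ⁻[X|m] ω ∂μ = ∫⁻ ω, φ ω * X ω ∂μ := by
  have htrim : (μ.withDensity μ⁻[X|m]).trim hm = (μ.withDensity X).trim hm := by
    refine @Measure.ext _ m _ _ fun s hs => ?_
    rw [trim_measurableSet_eq hm hs, trim_measurableSet_eq hm hs, withDensity_apply _ (hm s hs),
      withDensity_apply _ (hm s hs), setLIntegral_condLExp hm μ X hs]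
  have hφ₀ : AEMeasurable φ μ := (hφ.mono hm le_rfl).aemeasurable
  have hE : AEMeasurable μ⁻[X|m] μ := ((measurable_condLExp m μ X).mono hm le_rfl).aemeasurable
  calc ∫⁻ ω, φ ω * μ⁻[X|m] ω ∂μ = ∫⁻ ω, φ ω ∂(μ.withDensity μ⁻[X|m]) := by
        rw [lintegral_withDensity_eq_lintegral_mul₀ hE hφ₀]; simp_rw [Pi.mul_apply, mul_comm]
    _ = ∫⁻ ω, φ ω ∂(μ.withDensity X) := by
        rw [← lintegral_trim hm hφ, htrim, lintegral_trim hm hφ]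
    _ = ∫⁻ ω, φ ω * X ω ∂μ := by
        rw [lintegral_withDensity_eq_lintegral_mul₀ hX hφ₀]; simp_rw [Pi.mul_apply, mul_comm]

theorem lintegral_mul_ofReal_condExp {Ω : Type*} {m m0 : MeasurableSpace Ω} (hm : m ≤ m0)
    {μ : Measure Ω} [SigmaFinite (μ.trim hm)] {f : Ω → ℝ} (hf : Integrable f μ)
    (hf0 : 0 ≤ᵐ[μ] f) {φ : Ω → ℝ≥0∞} (hφ : Measurable[m] φ) :
    ∫⁻ ω, φ ω * ENNReal.ofReal (μ[f|m] ω) ∂μ = ∫⁻ ω, φ ω * ENNReal.ofReal (f ω) ∂μ := by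
  rw [← lintegral_mul_condLExp hm hf.aemeasurable.ennreal_ofReal hφ]
  refine lintegral_congr_ae ?_
  filter_upwards [condLExp_ofReal m hf hf0] with ω hω
  rw [hω]

theorem lintegral_rpow_le_of_ofReal_mul_lintegral_rpow_sub_one_mul_le {α : Type*}
    [MeasurableSpace α] {μ : Measure α} {p : ℝ} (hp0 : 0 < p) (hp1 : p ≤ 1) {F G : α → ℝ≥0∞}
    (hF : AEMeasurable F μ) (hG : AEMeasurable G μ)
    (h : ENNReal.ofReal p * ∫⁻ x, G x ^ (p - 1) * F x ∂μ ≤ ∫⁻ x, G x ^ p ∂μ) :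
    (∫⁻ x, F x ^ p ∂μ) ^ (1 / p) ≤ ENNReal.ofReal p⁻¹ * (∫⁻ x, G x ^ p ∂μ) ^ (1 / p) := by
  set I := ∫⁻ x, G x ^ p ∂μ
  set J := ∫⁻ x, G x ^ (p - 1) * F x ∂μ
  rw [ENNReal.ofReal_inv_of_pos hp0]
  rw [ENNReal.mul_le_iff_le_inv (by simpa using hp0) ENNReal.ofReal_ne_top] at h
  rcases hp1.eq_or_lt with rfl | hp1
  · simpa [J] using h
  rcases eq_or_ne I ∞ with hI | hI
  · rw [hI, ENNReal.top_rpow_of_pos (by positivity), ENNReal.mul_top (by simp)]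
    exact le_top
  have hJ : J ≠ ∞ := ne_top_of_le_ne_top (ENNReal.mul_ne_top (by simpa using hp0) hI) h
  have hFp : ∀ᵐ x ∂μ, F x ^ p = (G x ^ (p - 1) * F x) ^ p * (G x ^ p) ^ (1 - p) := by
    filter_upwards [ae_lt_top' (hG.pow_const p) hI,
      ae_lt_top' ((hG.pow_const (p - 1)).mul hF) hJ] with x hGx hJx
    exact ENNReal.rpow_eq_rpow_sub_one_mul_rpow_mul_rpow hp0 hp1
      ((ENNReal.rpow_eq_top_iff_of_pos hp0).not.1 hGx.ne) hJx.ne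
  have holder := ENNReal.lintegral_mul_le_Lp_mul_Lq μ
    (Real.holderConjugate_one_div hp0 (sub_pos.2 hp1) (add_sub_cancel p 1))
    (((hG.pow_const (p - 1)).mul hF).pow_const p) ((hG.pow_const p).pow_const (1 - p))
  simp only [Pi.mul_apply, one_div, inv_inv, ENNReal.rpow_rpow_inv hp0.ne',
    ENNReal.rpow_rpow_inv (sub_pos.2 hp1).ne'] at holder
  calc (∫⁻ x, F x ^ p ∂μ) ^ (1 / p) ≤ (J ^ p * I ^ (1 - p)) ^ (1 / p) := by
        rw [lintegral_congr_ae hFp]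
        exact ENNReal.rpow_le_rpow holder (by positivity)
    _ ≤ (((ENNReal.ofReal p)⁻¹ * I) ^ p * I ^ (1 - p)) ^ (1 / p) := by gcongr
    _ = (ENNReal.ofReal p)⁻¹ * I ^ (1 / p) := by
        rw [ENNReal.mul_rpow_of_nonneg _ _ hp0.le, mul_assoc,
          ← ENNReal.rpow_add_of_nonneg _ _ hp0.le (sub_pos.2 hp1).le, add_sub_cancel,
          ENNReal.rpow_one, ENNReal.mul_rpow_of_nonneg _ _ (by positivity), ← ENNReal.rpow_mul,
          mul_one_div_cancel hp0.ne', ENNReal.rpow_one]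

theorem ofReal_mul_lintegral_rpow_sub_one_mul_tsum_le {Ω : Type*} {m0 : MeasurableSpace Ω}
    {μ : Measure Ω} [IsFiniteMeasure μ] (ℱ : ℕ → MeasurableSpace Ω) (hle : ∀ n, ℱ n ≤ m0)
    (hmono : Monotone ℱ) {p : ℝ} (hp0 : 0 < p) (hp1 : p ≤ 1) (f : ℕ → Ω → ℝ)
    (hf0 : ∀ n, 0 ≤ᵐ[μ] f n) (hfint : ∀ n, Integrable (f n) μ) :
    ENNReal.ofReal p * ∫⁻ ω, (∑' n, ENNReal.ofReal (μ[f n|ℱ n] ω)) ^ (p - 1)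
        * ∑' n, ENNReal.ofReal (f n ω) ∂μ
      ≤ ∫⁻ ω, (∑' n, ENNReal.ofReal (μ[f n|ℱ n] ω)) ^ p ∂μ := by
  set g : ℕ → Ω → ℝ≥0∞ := fun n ω => ENNReal.ofReal (μ[f n|ℱ n] ω)
  set G : Ω → ℝ≥0∞ := fun ω => ∑' n, g n ω
  set S : ℕ → Ω → ℝ≥0∞ := fun n ω => ∑ k ∈ Finset.range (n + 1), g k ω
  have hg : ∀ n, Measurable[ℱ n] (g n) := fun n =>
    stronglyMeasurable_condExp.measurable.ennreal_ofReal
  have hS : ∀ n, Measurable[ℱ n] (S n) := fun n =>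
    Finset.measurable_sum _ fun k hk =>
      (hg k).mono (hmono (Nat.lt_succ_iff.1 (Finset.mem_range.1 hk))) le_rfl
  have hG : Measurable G := Measurable.tsum fun n => (hg n).mono (hle n) le_rfl
  have hSG : ∀ n ω, S n ω ≤ G ω := fun n ω => ENNReal.sum_le_tsum _
  have hterm : ∀ n, ∫⁻ ω, G ω ^ (p - 1) * ENNReal.ofReal (f n ω) ∂μ
      ≤ ∫⁻ ω, S n ω ^ (p - 1) * g n ω ∂μ := by
    intro n
    rw [lintegral_mul_ofReal_condExp (hle n) (hfint n) (hf0 n) ((hS n).pow_const _)]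
    exact lintegral_mono fun ω =>
      mul_le_mul_left (ENNReal.rpow_le_rpow_of_nonpos (hSG n ω) (by linarith)) _
  calc ENNReal.ofReal p * ∫⁻ ω, G ω ^ (p - 1) * ∑' n, ENNReal.ofReal (f n ω) ∂μ
      = ∑' n, ENNReal.ofReal p * ∫⁻ ω, G ω ^ (p - 1) * ENNReal.ofReal (f n ω) ∂μ := by
        have hmeas : ∀ n, AEMeasurable (fun ω => G ω ^ (p - 1) * ENNReal.ofReal (f n ω)) μ :=
          fun n => (hG.pow_const _).aemeasurable.mul (hfint n).aemeasurable.ennreal_ofReal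
        simp_rw [← ENNReal.tsum_mul_left, lintegral_tsum hmeas, ENNReal.tsum_mul_left]
    _ ≤ ∑' n, ENNReal.ofReal p * ∫⁻ ω, S n ω ^ (p - 1) * g n ω ∂μ := by
        gcongr ∑' n, _ * ?_ with n
        exact hterm n
    _ = ∫⁻ ω, ∑' n, ENNReal.ofReal p * S n ω ^ (p - 1) * g n ω ∂μ := by
        simp_rw [mul_assoc, ← lintegral_const_mul' _ _ ENNReal.ofReal_ne_top]
        refine (lintegral_tsum fun n => ?_).symm
        exact ((((hS n).pow_const _).mul (hg n)).mono (hle n) le_rfl).const_mul _ |>.aemeasurable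
    _ ≤ ∫⁻ ω, G ω ^ p ∂μ :=
        lintegral_mono fun ω =>
          ENNReal.tsum_ofReal_mul_rpow_sum_range_mul_le hp0 hp1 fun _ => ENNReal.ofReal_ne_top

/-- Reverse dual Doob inequality: for `0 < p ≤ 1` and nonnegative integrable `f_n`,
`(E|∑ f_n|^p)^{1/p} ≤ p⁻¹ (E|∑ E(f_n|F_n)|^p)^{1/p}`. -/
theorem stmt3 {Ω : Type*} {m0 : MeasurableSpace Ω} {μ : Measure Ω} [IsProbabilityMeasure μ]
    (ℱ : ℕ → MeasurableSpace Ω) (hle : ∀ n, ℱ n ≤ m0) (hmono : Monotone ℱ)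
    {p : ℝ} (hp0 : 0 < p) (hp1 : p ≤ 1)
    (f : ℕ → Ω → ℝ) (hf0 : ∀ n ω, 0 ≤ f n ω)
    (hfint : ∀ n, Integrable (f n) μ) :
    (∫⁻ ω, (∑' n, ENNReal.ofReal (f n ω)) ^ p ∂μ) ^ (1 / p)
      ≤ ENNReal.ofReal p⁻¹ *
        (∫⁻ ω, (∑' n, ENNReal.ofReal ((μ[f n | ℱ n]) ω)) ^ p ∂μ) ^ (1 / p) :=
  lintegral_rpow_le_of_ofReal_mul_lintegral_rpow_sub_one_mul_le hp0 hp1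
    (AEMeasurable.tsum fun n => (hfint n).aemeasurable.ennreal_ofReal)
    (AEMeasurable.tsum fun _ => integrable_condExp.aemeasurable.ennreal_ofReal)
    (ofReal_mul_lintegral_rpow_sub_one_mul_tsum_le ℱ hle hmono hp0 hp1 f
      (fun n => ae_of_all _ (hf0 n)) hfint)
end

section
/- Let (X, Y) be a compatible couple of Banach spaces (both continuously embedded in a Hausdorff topological vector space) such that X ∩ Y is dense in both X and Y. Then (X ∩ Y)* = X* + Y* and (X + Y)* = X* ∩ Y* hold isometrically, where X ∩ Y carries the norm max{‖z‖_X, ‖z‖_Y} and X + Y carries the norm inf{‖x‖_X + ‖y‖_Y : z = x + y}. -/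
open NormedSpace

/-- The sum norm `‖z‖_{X+Y} = inf{‖x‖_X + ‖y‖_Y : z = x + y}` on the ambient space `Z`,
for a compatible couple given by continuous embeddings `iX : X → Z`, `iY : Y → Z`. -/
noncomputable def sumNorm {Z X Y : Type*}
    [AddCommGroup Z] [Module ℝ Z] [TopologicalSpace Z]
    [IsTopologicalAddGroup Z] [ContinuousSMul ℝ Z]
    [NormedAddCommGroup X] [NormedSpace ℝ X]
    [NormedAddCommGroup Y] [NormedSpace ℝ Y]
    (iX : X →L[ℝ] Z) (iY : Y →L[ℝ] Z) (z : Z) : ℝ :=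
  sInf {r | ∃ (x : X) (y : Y), iX x + iY y = z ∧ r = ‖x‖ + ‖y‖}

/-!
Hahn–Banach extends a functional on `X ∩ Y ⊆ X × Y` to `X × Y` without increasing its norm, and
a functional `H` on `X × Y` (max norm) has norm exactly `‖H ∘ inl‖ + ‖H ∘ inr‖`; this gives
`(X ∩ Y)* = X* + Y*`. For the sum, `(x, y) ↦ x + y` maps `X × Y` onto `X + Y` with kernel
`{(x, -y) : x = y in Z}`, so a pair `(f, g)` descends to `X + Y` exactly when `f = g` on `X ∩ Y`.
The descended functional is bounded by `max ‖f‖ ‖g‖` against every decomposition, hence against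
the sum norm, and testing it on `X` and on `Y` alone gives the reverse bound.
-/

namespace LinearMap

variable {R M N P Q : Type*} [Ring R] [AddCommGroup M] [AddCommGroup N] [AddCommGroup P]
  [AddCommGroup Q] [Module R M] [Module R N] [Module R P] [Module R Q]

def coprodSup (f : M →ₗ[R] P) (g : N →ₗ[R] P) : M × N →ₗ[R] ↥(range f ⊔ range g) :=
  (f.coprod g).codRestrict _ fun p => range_coprod f g ▸ mem_range_self _ p

variable (f : M →ₗ[R] P) (g : N →ₗ[R] P)

@[simp]
theorem coe_coprodSup_apply (p : M × N) : (coprodSup f g p : P) = f p.1 + g p.2 := rfl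

theorem coprodSup_surjective : Function.Surjective (coprodSup f g) := by
  rintro ⟨z, hz⟩
  obtain ⟨p, rfl⟩ := range_coprod f g ▸ hz
  exact ⟨p, rfl⟩

theorem coprodSup_apply_neg_eq_zero_iff (x : M) (y : N) :
    coprodSup f g (x, -y) = 0 ↔ f x = g y := by
  simp [← Subtype.coe_inj, add_neg_eq_zero]

variable {f g} {φ : M →ₗ[R] Q} {ψ : N →ₗ[R] Q}

theorem apply_eq_of_comp_coprodSup_eq {F : ↥(range f ⊔ range g) →ₗ[R] Q}
    (hF : F.comp (coprodSup f g) = φ.coprod ψ) {x : M} {y : N} (hxy : f x = g y) :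
    φ x = ψ y := by
  have h := congr($hF (x, -y))
  rw [comp_apply, (coprodSup_apply_neg_eq_zero_iff f g x y).2 hxy, map_zero, coprod_apply,
    map_neg] at h
  exact add_neg_eq_zero.1 h.symm

theorem exists_comp_coprodSup_eq (hc : ∀ x y, f x = g y → φ x = ψ y) :
    ∃ F : ↥(range f ⊔ range g) →ₗ[R] Q, F.comp (coprodSup f g) = φ.coprod ψ := by
  have hker : ker (coprodSup f g) ≤ ker (φ.coprod ψ) := by
    rintro ⟨x, y⟩ h
    rw [mem_ker, ← neg_neg y, coprodSup_apply_neg_eq_zero_iff] at h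
    simp [hc x (-y) h]
  refine ⟨(ker _).liftQ _ hker ∘ₗ (quotKerEquivOfSurjective _ (coprodSup_surjective f g)).symm, ?_⟩
  ext p <;> simp

end LinearMap

open LinearMap (coprodSup coprodSup_surjective)

namespace ContinuousLinearMap

theorem norm_le_of_apply_eq_add {𝕜 X Y : Type*} [NontriviallyNormedField 𝕜]
    [SeminormedAddCommGroup X] [NormedSpace 𝕜 X] [SeminormedAddCommGroup Y] [NormedSpace 𝕜 Y]
    {I : Submodule 𝕜 (X × Y)} {h : StrongDual 𝕜 I} {f : StrongDual 𝕜 X} {g : StrongDual 𝕜 Y}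
    (hfg : ∀ pt : I, h pt = f pt.1.1 + g pt.1.2) : ‖h‖ ≤ ‖f‖ + ‖g‖ := by
  refine h.opNorm_le_bound (by positivity) fun pt => ?_
  calc ‖h pt‖ ≤ ‖f‖ * ‖pt.1.1‖ + ‖g‖ * ‖pt.1.2‖ :=
        (hfg pt ▸ norm_add_le _ _).trans (add_le_add (f.le_opNorm _) (g.le_opNorm _))
    _ ≤ ‖f‖ * ‖pt‖ + ‖g‖ * ‖pt‖ := by
        gcongr
        exacts [_root_.norm_fst_le (pt : X × Y), _root_.norm_snd_le (pt : X × Y)]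
    _ = (‖f‖ + ‖g‖) * ‖pt‖ := by ring

variable {E X Y : Type*} [SeminormedAddCommGroup E] [NormedSpace ℝ E]
  [SeminormedAddCommGroup X] [NormedSpace ℝ X] [SeminormedAddCommGroup Y] [NormedSpace ℝ Y]

theorem norm_le_of_forall_apply_le (f : StrongDual ℝ E) {c : ℝ}
    (hf : ∀ x, ‖x‖ ≤ 1 → f x ≤ c) : ‖f‖ ≤ c := by
  have hc : 0 ≤ c := by simpa using hf 0 (by simp)
  refine opNorm_le_of_unit_norm hc fun x hx => abs_le.2 ⟨?_, hf x hx.le⟩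
  have := hf (-x) (by simp [hx])
  rw [map_neg] at this
  linarith

theorem norm_comp_inl_add_norm_comp_inr_le (H : StrongDual ℝ (X × Y)) :
    ‖H.comp (inl ℝ X Y)‖ + ‖H.comp (inr ℝ X Y)‖ ≤ ‖H‖ := by
  have hH : ∀ x y, ‖x‖ ≤ 1 → ‖y‖ ≤ 1 → H.comp (inl ℝ X Y) x + H.comp (inr ℝ X Y) y ≤ ‖H‖ := by
    intro x y hx hy
    calc H.comp (inl ℝ X Y) x + H.comp (inr ℝ X Y) y = H (x, y) := by simp [← map_add]
      _ ≤ ‖H‖ * ‖(x, y)‖ := (le_abs_self _).trans (H.le_opNorm _)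
      _ ≤ ‖H‖ := mul_le_of_le_one_right (norm_nonneg H) (max_le hx hy)
  have : ‖H.comp (inr ℝ X Y)‖ ≤ ‖H‖ - ‖H.comp (inl ℝ X Y)‖ :=
    norm_le_of_forall_apply_le _ fun y hy => by
      have := norm_le_of_forall_apply_le (H.comp (inl ℝ X Y))
        (c := ‖H‖ - H.comp (inr ℝ X Y) y) fun x hx => by linarith [hH x y hx hy]
      linarith
  linarith

end ContinuousLinearMap

theorem isLeast_norm_dual_submodule_prod {X Y : Type*} [SeminormedAddCommGroup X]
    [NormedSpace ℝ X] [SeminormedAddCommGroup Y] [NormedSpace ℝ Y]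
    (I : Submodule ℝ (X × Y)) (h : StrongDual ℝ I) :
    IsLeast {r | ∃ (f : StrongDual ℝ X) (g : StrongDual ℝ Y),
      (∀ pt : I, h pt = f (pt : X × Y).1 + g (pt : X × Y).2) ∧ r = ‖f‖ + ‖g‖} ‖h‖ := by
  obtain ⟨H, hH, hnorm⟩ := exists_extension_norm_eq I h
  have hrep : ∀ pt : I, h pt = H.comp (.inl ℝ X Y) (pt : X × Y).1 +
      H.comp (.inr ℝ X Y) (pt : X × Y).2 := fun pt => by simp [← hH pt, ← map_add]
  refine ⟨⟨_, _, hrep, le_antisymm (ContinuousLinearMap.norm_le_of_apply_eq_add hrep) ?_⟩, ?_⟩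
  · exact hnorm ▸ H.norm_comp_inl_add_norm_comp_inr_le
  · rintro _ ⟨f, g, hfg, rfl⟩
    exact ContinuousLinearMap.norm_le_of_apply_eq_add hfg

section SumNorm

variable {Z X Y : Type*} [AddCommGroup Z] [Module ℝ Z] [TopologicalSpace Z]
  [IsTopologicalAddGroup Z] [ContinuousSMul ℝ Z]
  [NormedAddCommGroup X] [NormedSpace ℝ X] [NormedAddCommGroup Y] [NormedSpace ℝ Y]
  {iX : X →L[ℝ] Z} {iY : Y →L[ℝ] Z}

theorem sumNorm_le {z : Z} {x : X} {y : Y} (h : iX x + iY y = z) :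
    sumNorm iX iY z ≤ ‖x‖ + ‖y‖ :=
  csInf_le ⟨0, by rintro _ ⟨_, _, -, rfl⟩; positivity⟩ ⟨x, y, h, rfl⟩

theorem le_mul_sumNorm {z : Z} {a c : ℝ} (hc : 0 ≤ c) (hz : ∃ x y, iX x + iY y = z)
    (h : ∀ x y, iX x + iY y = z → a ≤ c * (‖x‖ + ‖y‖)) : a ≤ c * sumNorm iX iY z := by
  obtain ⟨x, y, hxy⟩ := hz
  rw [sumNorm, ← smul_eq_mul, ← Real.sInf_smul_of_nonneg hc]
  refine le_csInf ⟨_, Set.smul_mem_smul_set ⟨x, y, hxy, rfl⟩⟩ ?_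
  rintro _ ⟨_, ⟨x, y, hxy, rfl⟩, rfl⟩
  exact h x y hxy

variable {F : ↥(LinearMap.range (iX : X →ₗ[ℝ] Z) ⊔ LinearMap.range (iY : Y →ₗ[ℝ] Z)) →ₗ[ℝ] ℝ}

theorem abs_apply_le_max_mul_sumNorm {f : StrongDual ℝ X} {g : StrongDual ℝ Y}
    (hF : F ∘ₗ coprodSup (iX : X →ₗ[ℝ] Z) (iY : Y →ₗ[ℝ] Z) =
      (f : X →ₗ[ℝ] ℝ).coprod (g : Y →ₗ[ℝ] ℝ)) (z) :
    |F z| ≤ max ‖f‖ ‖g‖ * sumNorm iX iY z := by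
  obtain ⟨p, hp⟩ := coprodSup_surjective _ _ z
  refine le_mul_sumNorm (by positivity) ⟨p.1, p.2, congr_arg Subtype.val hp⟩ fun x y hxy => ?_
  obtain rfl : z = coprodSup _ _ (x, y) := Subtype.ext hxy.symm
  calc |F (coprodSup _ _ (x, y))| = |f x + g y| := by rw [← LinearMap.comp_apply, hF]; rfl
    _ ≤ ‖f‖ * ‖x‖ + ‖g‖ * ‖y‖ :=
        (abs_add_le _ _).trans (add_le_add (f.le_opNorm x) (g.le_opNorm y))
    _ ≤ max ‖f‖ ‖g‖ * ‖x‖ + max ‖f‖ ‖g‖ * ‖y‖ := by gcongr <;> simp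
    _ = max ‖f‖ ‖g‖ * (‖x‖ + ‖y‖) := by ring

theorem abs_apply_coprodSup_le {c : ℝ} (hc : 0 ≤ c) (hF : ∀ z, |F z| ≤ c * sumNorm iX iY z)
    (x : X) (y : Y) :
    |F (coprodSup (iX : X →ₗ[ℝ] Z) (iY : Y →ₗ[ℝ] Z) (x, y))| ≤ c * (‖x‖ + ‖y‖) :=
  (hF _).trans (mul_le_mul_of_nonneg_left (sumNorm_le rfl) hc)

theorem isLeast_max_norm_of_comp_coprodSup_eq {f : StrongDual ℝ X} {g : StrongDual ℝ Y}
    (hF : F ∘ₗ coprodSup (iX : X →ₗ[ℝ] Z) (iY : Y →ₗ[ℝ] Z) =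
      (f : X →ₗ[ℝ] ℝ).coprod (g : Y →ₗ[ℝ] ℝ)) :
    IsLeast {c | 0 ≤ c ∧ ∀ z, |F z| ≤ c * sumNorm iX iY z} (max ‖f‖ ‖g‖) := by
  refine ⟨⟨by positivity, abs_apply_le_max_mul_sumNorm hF⟩, fun c ⟨hc, hcF⟩ => max_le ?_ ?_⟩
  · refine f.opNorm_le_bound hc fun x => ?_
    simpa [← LinearMap.comp_apply, hF] using abs_apply_coprodSup_le hc hcF x 0
  · refine g.opNorm_le_bound hc fun y => ?_
    simpa [← LinearMap.comp_apply, hF] using abs_apply_coprodSup_le hc hcF 0 y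

theorem exists_strongDual_comp_coprodSup_eq {c : ℝ} (hc : 0 ≤ c)
    (hF : ∀ z, |F z| ≤ c * sumNorm iX iY z) :
    ∃ (f : StrongDual ℝ X) (g : StrongDual ℝ Y),
      F ∘ₗ coprodSup (iX : X →ₗ[ℝ] Z) (iY : Y →ₗ[ℝ] Z) =
        (f : X →ₗ[ℝ] ℝ).coprod (g : Y →ₗ[ℝ] ℝ) := by
  let Φ := F ∘ₗ coprodSup (iX : X →ₗ[ℝ] Z) (iY : Y →ₗ[ℝ] Z)
  refine ⟨(Φ ∘ₗ .inl ℝ X Y).mkContinuous c fun x => ?_,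
    (Φ ∘ₗ .inr ℝ X Y).mkContinuous c fun y => ?_, ?_⟩
  · simpa [Φ] using abs_apply_coprodSup_le hc hF x 0
  · simpa [Φ] using abs_apply_coprodSup_le hc hF 0 y
  · ext <;> simp [Φ]

end SumNorm

theorem stmt6_general {Z X Y : Type*}
    [AddCommGroup Z] [Module ℝ Z] [TopologicalSpace Z]
    [IsTopologicalAddGroup Z] [ContinuousSMul ℝ Z]
    [NormedAddCommGroup X] [NormedSpace ℝ X]
    [NormedAddCommGroup Y] [NormedSpace ℝ Y]
    (iX : X →L[ℝ] Z) (iY : Y →L[ℝ] Z)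
    (I : Submodule ℝ (X × Y)) :
    -- `(X ∩ Y)* = X* + Y*` isometrically: every functional on `I` is induced by a pair
    -- `(f, g) ∈ X* × Y*`, and its norm is the sum-infimum over all such representations.
    (∀ h : I →L[ℝ] ℝ,
      (∃ (f : StrongDual ℝ X) (g : StrongDual ℝ Y),
          ∀ pt : I, h pt = f (pt : X × Y).1 + g (pt : X × Y).2) ∧
      ‖h‖ = sInf {r | ∃ (f : StrongDual ℝ X) (g : StrongDual ℝ Y),
          (∀ pt : I, h pt = f (pt : X × Y).1 + g (pt : X × Y).2) ∧ r = ‖f‖ + ‖g‖}) ∧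
    -- `(X + Y)* = X* ∩ Y*` isometrically: bounded functionals on `X + Y` (with the sum
    -- norm) correspond to compatible pairs `(f, g)`, with norm `max{‖f‖, ‖g‖}`.
    (∀ (f : StrongDual ℝ X) (g : StrongDual ℝ Y),
      (∀ (x : X) (y : Y), iX x = iY y → f x = g y) →
      ∃ F : (LinearMap.range (iX : X →ₗ[ℝ] Z) ⊔ LinearMap.range (iY : Y →ₗ[ℝ] Z) :
          Submodule ℝ Z) →ₗ[ℝ] ℝ,
        (∀ (x : X) (y : Y)
            (hz : iX x + iY y ∈
              LinearMap.range (iX : X →ₗ[ℝ] Z) ⊔ LinearMap.range (iY : Y →ₗ[ℝ] Z)),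
          F ⟨iX x + iY y, hz⟩ = f x + g y) ∧
        sInf {c | 0 ≤ c ∧ ∀ z : (LinearMap.range (iX : X →ₗ[ℝ] Z) ⊔
              LinearMap.range (iY : Y →ₗ[ℝ] Z) : Submodule ℝ Z),
            |F z| ≤ c * sumNorm iX iY (z : Z)} = max ‖f‖ ‖g‖ ∧
        (∀ F' : (LinearMap.range (iX : X →ₗ[ℝ] Z) ⊔ LinearMap.range (iY : Y →ₗ[ℝ] Z) :
            Submodule ℝ Z) →ₗ[ℝ] ℝ,
          (∀ (x : X) (y : Y)
              (hz : iX x + iY y ∈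
                LinearMap.range (iX : X →ₗ[ℝ] Z) ⊔ LinearMap.range (iY : Y →ₗ[ℝ] Z)),
            F' ⟨iX x + iY y, hz⟩ = f x + g y) → F' = F)) ∧
    (∀ F : (LinearMap.range (iX : X →ₗ[ℝ] Z) ⊔ LinearMap.range (iY : Y →ₗ[ℝ] Z) :
        Submodule ℝ Z) →ₗ[ℝ] ℝ,
      (∃ c : ℝ, 0 ≤ c ∧ ∀ z : (LinearMap.range (iX : X →ₗ[ℝ] Z) ⊔
            LinearMap.range (iY : Y →ₗ[ℝ] Z) : Submodule ℝ Z),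
          |F z| ≤ c * sumNorm iX iY (z : Z)) →
      ∃ (f : StrongDual ℝ X) (g : StrongDual ℝ Y),
        (∀ (x : X) (y : Y), iX x = iY y → f x = g y) ∧
        ∀ (x : X) (y : Y)
            (hz : iX x + iY y ∈
              LinearMap.range (iX : X →ₗ[ℝ] Z) ⊔ LinearMap.range (iY : Y →ₗ[ℝ] Z)),
          F ⟨iX x + iY y, hz⟩ = f x + g y) := by
  refine ⟨fun h => ?_, fun f g hfg => ?_, fun F ⟨c, hc, hF⟩ => ?_⟩
  · have hleast := isLeast_norm_dual_submodule_prod I h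
    obtain ⟨f, g, hrep, -⟩ := hleast.1
    exact ⟨⟨f, g, hrep⟩, hleast.csInf_eq.symm⟩
  · obtain ⟨F, hF⟩ := LinearMap.exists_comp_coprodSup_eq (f := (iX : X →ₗ[ℝ] Z))
      (g := (iY : Y →ₗ[ℝ] Z)) (φ := (f : X →ₗ[ℝ] ℝ)) (ψ := (g : Y →ₗ[ℝ] ℝ)) hfg
    refine ⟨F, fun x y _ => congr($hF (x, y)),
      (isLeast_max_norm_of_comp_coprodSup_eq hF).csInf_eq, fun F' hF' => ?_⟩
    refine (LinearMap.cancel_right (coprodSup_surjective _ _)).1 (LinearMap.ext fun p => ?_)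
    exact (hF' p.1 p.2 _).trans congr($hF p).symm
  · obtain ⟨f, g, hfg⟩ := exists_strongDual_comp_coprodSup_eq hc hF
    exact ⟨f, g, fun x y => LinearMap.apply_eq_of_comp_coprodSup_eq hfg,
      fun x y _ => congr($hfg (x, y))⟩

/-- Duality for sums and intersections of a compatible couple `(X, Y)` of Banach spaces,
continuously embedded in a Hausdorff topological vector space `Z`, with `X ∩ Y` dense in
both `X` and `Y`:  `(X ∩ Y)* = X* + Y*` and `(X + Y)* = X* ∩ Y*` hold isometrically.
Here `X ∩ Y` is realised as the submodule `I = {(x, y) : iX x = iY y}` of `X × Y`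
(whose induced norm is `max{‖x‖, ‖y‖}`), and `X + Y` as the submodule
`range iX ⊔ range iY` of `Z` equipped with the sum norm `sumNorm`. -/
theorem stmt6 {Z X Y : Type*}
    [AddCommGroup Z] [Module ℝ Z] [TopologicalSpace Z] [T2Space Z]
    [IsTopologicalAddGroup Z] [ContinuousSMul ℝ Z]
    [NormedAddCommGroup X] [NormedSpace ℝ X] [CompleteSpace X]
    [NormedAddCommGroup Y] [NormedSpace ℝ Y] [CompleteSpace Y]
    (iX : X →L[ℝ] Z) (iY : Y →L[ℝ] Z)
    (hiX : Function.Injective iX) (hiY : Function.Injective iY)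
    (I : Submodule ℝ (X × Y))
    (hI : ∀ pt : X × Y, pt ∈ I ↔ iX pt.1 = iY pt.2)
    (hdX : DenseRange fun pt : I => (pt : X × Y).1)
    (hdY : DenseRange fun pt : I => (pt : X × Y).2) :
    -- `(X ∩ Y)* = X* + Y*` isometrically: every functional on `I` is induced by a pair
    -- `(f, g) ∈ X* × Y*`, and its norm is the sum-infimum over all such representations.
    (∀ h : I →L[ℝ] ℝ,
      (∃ (f : StrongDual ℝ X) (g : StrongDual ℝ Y),
          ∀ pt : I, h pt = f (pt : X × Y).1 + g (pt : X × Y).2) ∧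
      ‖h‖ = sInf {r | ∃ (f : StrongDual ℝ X) (g : StrongDual ℝ Y),
          (∀ pt : I, h pt = f (pt : X × Y).1 + g (pt : X × Y).2) ∧ r = ‖f‖ + ‖g‖}) ∧
    -- `(X + Y)* = X* ∩ Y*` isometrically: bounded functionals on `X + Y` (with the sum
    -- norm) correspond to compatible pairs `(f, g)`, with norm `max{‖f‖, ‖g‖}`.
    (∀ (f : StrongDual ℝ X) (g : StrongDual ℝ Y),
      (∀ (x : X) (y : Y), iX x = iY y → f x = g y) →
      ∃ F : (LinearMap.range (iX : X →ₗ[ℝ] Z) ⊔ LinearMap.range (iY : Y →ₗ[ℝ] Z) :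
          Submodule ℝ Z) →ₗ[ℝ] ℝ,
        (∀ (x : X) (y : Y)
            (hz : iX x + iY y ∈
              LinearMap.range (iX : X →ₗ[ℝ] Z) ⊔ LinearMap.range (iY : Y →ₗ[ℝ] Z)),
          F ⟨iX x + iY y, hz⟩ = f x + g y) ∧
        sInf {c | 0 ≤ c ∧ ∀ z : (LinearMap.range (iX : X →ₗ[ℝ] Z) ⊔
              LinearMap.range (iY : Y →ₗ[ℝ] Z) : Submodule ℝ Z),
            |F z| ≤ c * sumNorm iX iY (z : Z)} = max ‖f‖ ‖g‖ ∧
        (∀ F' : (LinearMap.range (iX : X →ₗ[ℝ] Z) ⊔ LinearMap.range (iY : Y →ₗ[ℝ] Z) :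
            Submodule ℝ Z) →ₗ[ℝ] ℝ,
          (∀ (x : X) (y : Y)
              (hz : iX x + iY y ∈
                LinearMap.range (iX : X →ₗ[ℝ] Z) ⊔ LinearMap.range (iY : Y →ₗ[ℝ] Z)),
            F' ⟨iX x + iY y, hz⟩ = f x + g y) → F' = F)) ∧
    (∀ F : (LinearMap.range (iX : X →ₗ[ℝ] Z) ⊔ LinearMap.range (iY : Y →ₗ[ℝ] Z) :
        Submodule ℝ Z) →ₗ[ℝ] ℝ,
      (∃ c : ℝ, 0 ≤ c ∧ ∀ z : (LinearMap.range (iX : X →ₗ[ℝ] Z) ⊔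
            LinearMap.range (iY : Y →ₗ[ℝ] Z) : Submodule ℝ Z),
          |F z| ≤ c * sumNorm iX iY (z : Z)) →
      ∃ (f : StrongDual ℝ X) (g : StrongDual ℝ Y),
        (∀ (x : X) (y : Y), iX x = iY y → f x = g y) ∧
        ∀ (x : X) (y : Y)
            (hz : iX x + iY y ∈
              LinearMap.range (iX : X →ₗ[ℝ] Z) ⊔ LinearMap.range (iY : Y →ₗ[ℝ] Z)),
          F ⟨iX x + iY y, hz⟩ = f x + g y) :=
  stmt6_general iX iY I
end
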